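/- Let d ≥ 2 and a > 2b > 0, and let y ∈ S₀ ∪ S₋. Then u_y'(r) < 0 for all r ∈ (0, r_y); in particular u_y is strictly decreasing on (0, r_y), i.e. u_y reaches 0 before u_y' can vanish. -/

import Mathlib

open Real Filter Topology

noncomputable section

/-- The nonlinearity `F(x) = (a/2)·sin(2x)·(sin²x − b/a)`. -/
def Fnl (a b x : ℝ) : ℝ := (a / 2) * Real.sin (2 * x) * (Real.sin x ^ 2 - b / a)

/-- `u` solves the radial ODE `u'' + ((d−1)/r)u' + F(u) = 0` on `(0,∞)` with `u'(0) = 0`. -/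
def IsRadialSol (d : ℕ) (a b : ℝ) (u : ℝ → ℝ) : Prop :=
  ContDiff ℝ 2 u ∧ deriv u 0 = 0 ∧
  ∀ r : ℝ, 0 < r →
    deriv (deriv u) r + (((d : ℝ) - 1) / r) * deriv u r + Fnl a b (u r) = 0

/-- `u` is the family of solutions of the radial ODE with `u y 0 = y`, `(u y)'(0) = 0`. -/
def IsShootingFamily (d : ℕ) (a b : ℝ) (u : ℝ → ℝ → ℝ) : Prop :=
  ∀ y ∈ Set.Ioo (0 : ℝ) (Real.pi / 2), IsRadialSol d a b (u y) ∧ u y 0 = y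

/-- `S₊`: initial data whose solution stays bounded away from zero. -/
def Splus (u : ℝ → ℝ → ℝ) : Set ℝ :=
  {y | y ∈ Set.Ioo (0 : ℝ) (Real.pi / 2) ∧ ∃ ε > (0 : ℝ), ∀ r : ℝ, 0 ≤ r → ε ≤ u y r}

/-- `S₀`: initial data whose solution is positive and tends to zero at infinity. -/
def Szero (u : ℝ → ℝ → ℝ) : Set ℝ :=
  {y | y ∈ Set.Ioo (0 : ℝ) (Real.pi / 2) ∧ (∀ r : ℝ, 0 ≤ r → 0 < u y r) ∧
    Tendsto (u y) atTop (nhds 0)}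

/-- `S₋`: initial data whose solution vanishes at some positive radius. -/
def Sminus (u : ℝ → ℝ → ℝ) : Set ℝ :=
  {y | y ∈ Set.Ioo (0 : ℝ) (Real.pi / 2) ∧ ∃ r > (0 : ℝ), u y r = 0}

def Gaux (a b x : ℝ) : ℝ := a / 4 * Real.sin x ^ 4 - b / 2 * Real.sin x ^ 2

lemma Gaux_hasDerivAt (a b : ℝ) (ha : a ≠ 0) (x : ℝ) :
    HasDerivAt (Gaux a b) (Fnl a b x) x := by
  have hs := Real.hasDerivAt_sin x
  have h1 : HasDerivAt (fun t => a / 4 * Real.sin t ^ 4 - b / 2 * Real.sin t ^ 2)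
      (a / 4 * ((4 : ℕ) * Real.sin x ^ 3 * Real.cos x)
        - b / 2 * ((2 : ℕ) * Real.sin x ^ 1 * Real.cos x)) x :=
    ((hs.pow 4).const_mul (a / 4)).sub ((hs.pow 2).const_mul (b / 2))
  have : HasDerivAt (Gaux a b)
      (a / 4 * ((4 : ℕ) * Real.sin x ^ 3 * Real.cos x)
        - b / 2 * ((2 : ℕ) * Real.sin x ^ 1 * Real.cos x)) x := h1
  convert this using 1
  unfold Fnl
  rw [Real.sin_two_mul]
  field_simp
  ring

lemma Gaux_zero (a b : ℝ) : Gaux a b 0 = 0 := by simp [Gaux]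

lemma Gaux_continuous (a b : ℝ) : Continuous (Gaux a b) := by unfold Gaux; fun_prop

lemma Fnl_continuous (a b : ℝ) : Continuous (Fnl a b) := by unfold Fnl; fun_prop

/-- Energy of a solution. -/
def Eaux (a b : ℝ) (f : ℝ → ℝ) (r : ℝ) : ℝ := (deriv f r) ^ 2 / 2 + Gaux a b (f r)

section Energy

variable {d : ℕ} {a b : ℝ} {f : ℝ → ℝ}

lemma energy_hasDerivAt (ha : 0 < a) (hC : ContDiff ℝ 2 f)
    (hode : ∀ r : ℝ, 0 < r →
      deriv (deriv f) r + (((d : ℝ) - 1) / r) * deriv f r + Fnl a b (f r) = 0)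
    {r : ℝ} (hr : 0 < r) :
    HasDerivAt (Eaux a b f) (-(((d : ℝ) - 1) / r) * (deriv f r) ^ 2) r := by
  have hC1 : ContDiff ℝ 1 (deriv f) :=
    ((contDiff_succ_iff_deriv (n := 1)).mp (by exact_mod_cast hC)).2.2
  have hdiff : Differentiable ℝ f := hC.differentiable (by norm_num)
  have hdiff1 : Differentiable ℝ (deriv f) := hC1.differentiable one_ne_zero
  have h1 : HasDerivAt (deriv f) (deriv (deriv f) r) r := (hdiff1 r).hasDerivAt
  have h2 : HasDerivAt f (deriv f r) r := (hdiff r).hasDerivAt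
  have h3 : HasDerivAt (fun s => Gaux a b (f s)) (Fnl a b (f r) * deriv f r) r :=
    (Gaux_hasDerivAt a b ha.ne' (f r)).comp r h2
  have h4 : HasDerivAt (fun s => (deriv f s) ^ 2 / 2)
      (((2 : ℕ) * deriv f r ^ 1 * deriv (deriv f) r) / 2) r := (h1.pow 2).div_const 2
  have h5 := h4.add h3
  have hds : deriv (deriv f) r = -(((d : ℝ) - 1) / r * deriv f r) - Fnl a b (f r) := by
    have := hode r hr; linarith
  refine h5.congr_deriv ?_
  rw [hds]; push_cast; ring

lemma energy_antitone (hd : 2 ≤ d) (ha : 0 < a) (hC : ContDiff ℝ 2 f)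
    (hode : ∀ r : ℝ, 0 < r →
      deriv (deriv f) r + (((d : ℝ) - 1) / r) * deriv f r + Fnl a b (f r) = 0) :
    AntitoneOn (Eaux a b f) (Set.Ici 0) := by
  have hC1 : ContDiff ℝ 1 (deriv f) :=
    ((contDiff_succ_iff_deriv (n := 1)).mp (by exact_mod_cast hC)).2.2
  have hdiff : Differentiable ℝ f := hC.differentiable (by norm_num)
  have hdiff1 : Differentiable ℝ (deriv f) := hC1.differentiable one_ne_zero
  have hGdiff : Differentiable ℝ (Gaux a b) :=
    fun x => (Gaux_hasDerivAt a b ha.ne' x).differentiableAt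
  have hEdiff : Differentiable ℝ (Eaux a b f) := by
    unfold Eaux
    exact ((hdiff1.pow 2).div_const 2).add (hGdiff.comp hdiff)
  apply antitoneOn_of_deriv_nonpos (convex_Ici 0) hEdiff.continuous.continuousOn
    (hEdiff.differentiableOn)
  intro x hx
  rw [interior_Ici] at hx
  rw [(energy_hasDerivAt ha hC hode hx).deriv]
  have hd1 : (0 : ℝ) ≤ ((d : ℝ) - 1) / x := by
    apply div_nonneg _ (le_of_lt hx)
    have : (2 : ℝ) ≤ (d : ℝ) := by exact_mod_cast hd
    linarith
  nlinarith [sq_nonneg (deriv f x)]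

end Energy

/-- For `y ∈ S₀ ∪ S₋`, the solution `u_y` is strictly decreasing before its first zero:
`u_y'(r) < 0` for every `r ∈ (0, r_y)`, where `r < r_y` is expressed by saying that
`u_y` is still positive on `(0, r]`. -/
theorem derivative_negative_before_first_zero (d : ℕ) (hd : 2 ≤ d) (a b : ℝ)
    (hb : 0 < b) (hab : 2 * b < a)
    (u : ℝ → ℝ → ℝ) (hfam : IsShootingFamily d a b u)
    (y : ℝ) (hy : y ∈ Szero u ∪ Sminus u) :
    ∀ r : ℝ, 0 < r → (∀ s : ℝ, 0 < s → s ≤ r → 0 < u y s) → deriv (u y) r < 0 := by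
  have ha : 0 < a := by linarith
  have hyI : y ∈ Set.Ioo (0 : ℝ) (Real.pi / 2) := by
    rcases hy with h | h
    · exact h.1
    · exact h.1
  obtain ⟨⟨hC, hd0, hode⟩, hf0⟩ := hfam y hyI
  set f := u y with hfdef
  have hC1 : ContDiff ℝ 1 (deriv f) :=
    ((contDiff_succ_iff_deriv (n := 1)).mp (by exact_mod_cast hC)).2.2
  have hdiff : Differentiable ℝ f := hC.differentiable (by norm_num)
  have hdiff1 : Differentiable ℝ (deriv f) := hC1.differentiable one_ne_zero
  have hcont2 : Continuous (deriv (deriv f)) := hC1.continuous_deriv le_rfl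
  have hEanti : AntitoneOn (Eaux a b f) (Set.Ici 0) := energy_antitone hd ha hC hode
  -- key lemma: negative energy at a point before the first zero contradicts y ∈ S₀ ∪ S₋
  have keyL : ∀ R : ℝ, 0 ≤ R → (∀ s, 0 < s → s ≤ R → 0 < f s) → Eaux a b f R < 0 → False := by
    intro R hR hHp hER
    rcases hy with hzero | hminus
    · obtain ⟨-, -, hlim⟩ := hzero
      have hlim' : Tendsto f atTop (𝓝 0) := hlim
      have hGlim : Tendsto (fun r => Gaux a b (f r)) atTop (𝓝 0) := by
        have h := ((Gaux_continuous a b).tendsto 0).comp hlim'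
        rwa [Gaux_zero] at h
      have h1 : ∀ᶠ r in atTop, Eaux a b f R < Gaux a b (f r) :=
        hGlim.eventually_const_lt hER
      obtain ⟨r, hr1, hr2⟩ := (h1.and (eventually_ge_atTop R)).exists
      have hE : Eaux a b f r ≤ Eaux a b f R :=
        hEanti (Set.mem_Ici.mpr hR) (Set.mem_Ici.mpr (le_trans hR hr2)) hr2
      have h3 : (deriv f r) ^ 2 / 2 + Gaux a b (f r) ≤ Eaux a b f R := hE
      nlinarith [sq_nonneg (deriv f r)]
    · obtain ⟨-, r2, hr2pos, hz⟩ := hminus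
      have hz' : f r2 = 0 := hz
      by_cases hcase : r2 ≤ R
      · exact absurd hz' (ne_of_gt (hHp r2 hr2pos hcase))
      · push_neg at hcase
        have hE : Eaux a b f r2 ≤ Eaux a b f R :=
          hEanti (Set.mem_Ici.mpr hR) (Set.mem_Ici.mpr (le_trans hR (le_of_lt hcase)))
            (le_of_lt hcase)
        have hEr2 : Eaux a b f r2 = (deriv f r2) ^ 2 / 2 := by
          show (deriv f r2) ^ 2 / 2 + Gaux a b (f r2) = _
          rw [hz', Gaux_zero, add_zero]
        nlinarith [sq_nonneg (deriv f r2)]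
  -- Step 0: G(y) ≥ 0
  have hE0 : Eaux a b f 0 = Gaux a b y := by
    show (deriv f 0) ^ 2 / 2 + Gaux a b (f 0) = _
    rw [hd0, hf0]; norm_num
  have hGy : 0 ≤ Gaux a b y := by
    by_contra h
    push_neg at h
    exact keyL 0 le_rfl (fun s hs hsle => absurd (hs.trans_le hsle) (lt_irrefl 0))
      (by rw [hE0]; exact h)
  have hpi : 0 < Real.pi := Real.pi_pos
  have hsy : 0 < Real.sin y :=
    Real.sin_pos_of_pos_of_lt_pi hyI.1 (by linarith [hyI.2])
  have hs2 : b / a < Real.sin y ^ 2 := by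
    have hG : 0 ≤ a / 4 * Real.sin y ^ 4 - b / 2 * Real.sin y ^ 2 := hGy
    rw [div_lt_iff₀ ha]
    nlinarith [sq_nonneg (Real.sin y), mul_pos hsy hsy]
  have hcy : 0 < Real.cos y := Real.cos_pos_of_mem_Ioo ⟨by linarith [hyI.1], hyI.2⟩
  have hFy : 0 < Fnl a b y := by
    unfold Fnl
    rw [Real.sin_two_mul]
    exact mul_pos (mul_pos (half_pos ha) (mul_pos (mul_pos two_pos hsy) hcy))
      (sub_pos.mpr hs2)
  -- Step A: slope of deriv f at 0, second derivative at 0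
  have hslope : Tendsto (fun r => deriv f r / r) (𝓝[>] 0) (𝓝 (deriv (deriv f) 0)) := by
    have h := (hdiff1 0).hasDerivAt
    rw [hasDerivAt_iff_tendsto_slope] at h
    have h2 := h.mono_left
      (nhdsWithin_mono 0 (fun x (hx : x ∈ Set.Ioi (0:ℝ)) => ne_of_gt hx))
    refine h2.congr' ?_
    filter_upwards [self_mem_nhdsWithin] with r hr
    rw [slope_def_field, hd0, sub_zero, sub_zero]
  have hdd0 : (d : ℝ) * deriv (deriv f) 0 = -Fnl a b y := by
    have hrhs : Tendsto
        (fun r => -(((d : ℝ) - 1) * (deriv f r / r)) - Fnl a b (f r)) (𝓝[>] 0)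
        (𝓝 (-(((d : ℝ) - 1) * deriv (deriv f) 0) - Fnl a b y)) := by
      apply Tendsto.sub
      · exact (hslope.const_mul _).neg
      · have hfy : Tendsto f (𝓝[>] 0) (𝓝 y) := by
          have := (hC.continuous.tendsto 0).mono_left (nhdsWithin_le_nhds (s := Set.Ioi 0))
          rwa [hf0] at this
        exact ((Fnl_continuous a b).tendsto y).comp hfy
    have hlhs : Tendsto (deriv (deriv f)) (𝓝[>] 0) (𝓝 (deriv (deriv f) 0)) :=
      (hcont2.tendsto 0).mono_left (nhdsWithin_le_nhds (s := Set.Ioi 0))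
    have heq : deriv (deriv f) =ᶠ[𝓝[>] (0:ℝ)]
        fun r => -(((d : ℝ) - 1) * (deriv f r / r)) - Fnl a b (f r) := by
      filter_upwards [self_mem_nhdsWithin] with r hr
      have hode' := hode r hr
      have hmul : ((d : ℝ) - 1) / r * deriv f r = ((d : ℝ) - 1) * (deriv f r / r) := by
        ring
      rw [hmul] at hode'
      linarith
    have huniq := tendsto_nhds_unique (hlhs.congr' heq) hrhs
    linear_combination huniq
  have hcneg : deriv (deriv f) 0 < 0 := by
    have hd2 : (2 : ℝ) ≤ (d : ℝ) := by exact_mod_cast hd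
    nlinarith
  -- deriv f is negative on a right neighborhood of 0
  have hev : ∀ᶠ r in 𝓝[>] (0:ℝ), deriv f r < 0 := by
    filter_upwards [hslope.eventually_lt_const hcneg, self_mem_nhdsWithin] with r h1 h2
    have hr : (0:ℝ) < r := h2
    have : deriv f r = deriv f r / r * r := by field_simp
    rw [this]
    exact mul_neg_of_neg_of_pos h1 hr
  obtain ⟨δ, hδ0, hδ⟩ := mem_nhdsGT_iff_exists_Ioc_subset.mp hev
  rw [Set.mem_Ioi] at hδ0
  -- Main argument
  intro r₀ hr₀ Hpos
  by_contra hcon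
  push_neg at hcon
  have hδr₀ : δ < r₀ := by
    by_contra h
    push_neg at h
    exact absurd (hδ ⟨hr₀, h⟩) (not_lt.mpr hcon)
  set T := {s : ℝ | s ∈ Set.Icc δ r₀ ∧ 0 ≤ deriv f s} with hTdef
  have hTne : T.Nonempty := ⟨r₀, ⟨le_of_lt hδr₀, le_rfl⟩, hcon⟩
  have hTclosed : IsClosed T := by
    have : T = Set.Icc δ r₀ ∩ (deriv f) ⁻¹' Set.Ici 0 := by
      ext s; simp [hTdef, Set.mem_Icc]
    rw [this]
    exact isClosed_Icc.inter (isClosed_Ici.preimage hC1.continuous)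
  have hTbdd : BddBelow T := ⟨δ, fun s hs => hs.1.1⟩
  set r₁ := sInf T with hr₁def
  have hr₁T : r₁ ∈ T := hTclosed.csInf_mem hTne hTbdd
  have hfδ : deriv f δ < 0 := hδ ⟨hδ0, le_rfl⟩
  have hδr₁ : δ < r₁ := by
    refine lt_of_le_of_ne hr₁T.1.1 ?_
    intro h
    rw [← h] at hr₁T
    exact absurd hr₁T.2 (not_le.mpr hfδ)
  have hr₁r₀ : r₁ ≤ r₀ := hr₁T.1.2
  have hr₁pos : 0 < r₁ := lt_trans hδ0 hδr₁
  have hnegbefore : ∀ s, 0 < s → s < r₁ → deriv f s < 0 := by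
    intro s hs hsr
    by_cases h : s ≤ δ
    · exact hδ ⟨hs, h⟩
    · push_neg at h
      by_contra h2
      push_neg at h2
      have hsT : s ∈ T := ⟨⟨le_of_lt h, le_trans (le_of_lt hsr) hr₁r₀⟩, h2⟩
      exact absurd (csInf_le hTbdd hsT) (not_le.mpr hsr)
  have hf'r₁ : deriv f r₁ = 0 := by
    refine le_antisymm ?_ hr₁T.2
    have ht : Tendsto (deriv f) (𝓝[<] r₁) (𝓝 (deriv f r₁)) :=
      (hC1.continuous.tendsto r₁).mono_left (nhdsWithin_le_nhds (s := Set.Iio r₁))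
    refine le_of_tendsto ht ?_
    filter_upwards [Ioo_mem_nhdsLT_of_mem (⟨hδr₁, le_refl r₁⟩ : r₁ ∈ Set.Ioc δ r₁)] with s hs
    exact le_of_lt (hnegbefore s (lt_trans hδ0 hs.1) hs.2)
  have hdd : 0 ≤ deriv (deriv f) r₁ := by
    have h := (hdiff1 r₁).hasDerivAt
    rw [hasDerivAt_iff_tendsto_slope] at h
    have h2 := h.mono_left
      (nhdsWithin_mono r₁ (fun x (hx : x ∈ Set.Iio r₁) => ne_of_lt hx))
    refine ge_of_tendsto h2 ?_
    filter_upwards [Ioo_mem_nhdsLT_of_mem (⟨hδr₁, le_refl r₁⟩ : r₁ ∈ Set.Ioc δ r₁)] with s hs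
    have hs' : deriv f s < 0 := hnegbefore s (lt_trans hδ0 hs.1) hs.2
    rw [slope_def_field, hf'r₁, sub_zero]
    have hden : s - r₁ < 0 := by linarith [hs.2]
    exact le_of_lt (div_pos_iff.mpr (Or.inr ⟨hs', hden⟩))
  have hFle : Fnl a b (f r₁) ≤ 0 := by
    have h := hode r₁ hr₁pos
    rw [hf'r₁, mul_zero, add_zero] at h
    linarith
  have hx0 : 0 < f r₁ := Hpos r₁ hr₁pos hr₁r₀
  have hanti : StrictAntiOn f (Set.Icc 0 r₁) := by
    refine strictAntiOn_of_deriv_neg (convex_Icc 0 r₁) hC.continuous.continuousOn ?_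
    rw [interior_Icc]
    intro s hs
    exact hnegbefore s hs.1 hs.2
  have hxlty : f r₁ < y := by
    have := hanti ⟨le_rfl, le_of_lt hr₁pos⟩ ⟨le_of_lt hr₁pos, le_rfl⟩ hr₁pos
    rwa [hf0] at this
  have hxlt : f r₁ < Real.pi / 2 := lt_trans hxlty hyI.2
  have hsin1 : 0 < Real.sin (f r₁) :=
    Real.sin_pos_of_pos_of_lt_pi hx0 (by linarith)
  have hsin2 : Real.sin (f r₁) ^ 2 ≤ b / a := by
    by_contra h
    push_neg at h
    have hcos : 0 < Real.cos (f r₁) :=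
      Real.cos_pos_of_mem_Ioo ⟨by linarith, hxlt⟩
    have hFpos : 0 < Fnl a b (f r₁) := by
      unfold Fnl
      rw [Real.sin_two_mul]
      exact mul_pos (mul_pos (half_pos ha) (mul_pos (mul_pos two_pos hsin1) hcos))
        (sub_pos.mpr h)
    linarith
  have hGneg : Gaux a b (f r₁) < 0 := by
    have h1 : a * Real.sin (f r₁) ^ 2 ≤ b := by
      have := (le_div_iff₀ ha).mp hsin2
      linarith
    show a / 4 * Real.sin (f r₁) ^ 4 - b / 2 * Real.sin (f r₁) ^ 2 < 0
    nlinarith [mul_le_mul_of_nonneg_right h1 (sq_nonneg (Real.sin (f r₁))),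
      mul_pos hb (mul_pos hsin1 hsin1)]
  have hEr₁ : Eaux a b f r₁ < 0 := by
    have : Eaux a b f r₁ = Gaux a b (f r₁) := by
      show (deriv f r₁) ^ 2 / 2 + Gaux a b (f r₁) = _
      rw [hf'r₁]; norm_num
    rw [this]
    exact hGneg
  exact keyL r₁ (le_of_lt hr₁pos) (fun s hs hsle => Hpos s hs (le_trans hsle hr₁r₀)) hEr₁
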